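/- arXiv:0808.0884 — 3 statements merged into one kernel-verified Lean document; each statement's English description precedes it below -/
import Mathlib

section
/- Let S and T be Young diagrams. For a cell x = (i,j) (row index i, column index j, both 0-based), define the arm-length of x with respect to a Young diagram Y as a_Y(i,j) = (length of row i of Y) − j − 1 and the leg-length as l_Y(i,j) = (length of column j of Y) − i − 1 (these are integers, possibly negative, when x need not lie in Y). For a Young diagram Y define Q_Y(t₁,t₂) = Σ_{(i,j)∈Y} t₁^i t₂^j. Then in the ring of Laurent polynomials ℤ[t₁^{±1}, t₂^{±1}] the following identity holds: Q_S(t₁,t₂)·t₁t₂ + Q_T(t₁^{-1},t₂^{-1}) − Q_S(t₁,t₂)·Q_T(t₁^{-1},t₂^{-1})·(1−t₁)(1−t₂) = Σ_{s∈S} t₁^{−l_T(s)} t₂^{a_S(s)+1} + Σ_{t∈T} t₁^{l_S(t)+1} t₂^{−a_T(t)}. -/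
/-- The monomial `t₁^a * t₂^b` in the Laurent polynomial ring `ℤ[t₁^{±1}, t₂^{±1}]`,
realized as `LaurentPolynomial (LaurentPolynomial ℤ)` where the outer variable is `t₁`
and the inner (coefficient) variable is `t₂`. -/
noncomputable def laurentMon (a b : ℤ) : LaurentPolynomial (LaurentPolynomial ℤ) :=
  LaurentPolynomial.C (LaurentPolynomial.T b) * LaurentPolynomial.T a

/-- Arm-length `a_Y(i,j) = rowLen Y i − j − 1` of the cell `(i,j)` with respect to the
Young diagram `Y` (an integer, possibly negative). -/
def armLength (Y : YoungDiagram) (c : ℕ × ℕ) : ℤ :=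
  (Y.rowLen c.1 : ℤ) - (c.2 : ℤ) - 1

/-- Leg-length `l_Y(i,j) = colLen Y j − i − 1` of the cell `(i,j)` with respect to the
Young diagram `Y` (an integer, possibly negative). -/
def legLength (Y : YoungDiagram) (c : ℕ × ℕ) : ℤ :=
  (Y.colLen c.2 : ℤ) - (c.1 : ℤ) - 1

/-
Write `x = t₁`, `y = t₂`, and `λ`, `μ` for the row lengths of `S`, `T`. Summing a geometric
series along the column of `T` through `s` turns `x^{-l_T(s)}` into `x^{s₁+1}` plus `(1 - x)`
times a sum over the cells of `T` in that column, and symmetrically for the second sum on the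
right. After reflecting each row, the right side becomes `Q_S·xy + Q_T(x⁻¹,y⁻¹)` plus `(1 - x)`
times sums over pairs of cells `(i,j) ∈ S`, `(k,j) ∈ T` in a common column. Comparing with the
left side one pair of rows `(i, k)` at a time leaves the one-variable identity
`(y - 1) Σ_{j<λ_i} Σ_{l<μ_k} y^{j-l} = Σ_{j<min(λ_i,μ_k)} (y^{λ_i-j} - y^{j+1-μ_k})`,
which holds because `j ↦ if j < μ then λ-1-j else j-μ` permutes `{0, …, λ-1}`.
-/

open Finset

theorem Finset.sum_range_int_succ_eq_sum_ite {β : Type*} [AddCommMonoid β] (f : ℤ → β) (n m : ℕ) :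
    ∑ j ∈ range n, f (j + 1) = ∑ j ∈ range n, f (if j < m then n - j else j + 1 - m) := by
  refine sum_nbij' (fun j => if j + m < n then j + m else n - 1 - j)
    (fun e => if e < m then n - 1 - e else e - m) ?_ ?_ ?_ ?_ ?_ <;> intro j hj <;>
  simp only [mem_range] at hj ⊢ <;> split_ifs <;> first | omega | (congr 1; omega)

theorem Finset.sum_range_reflect_int {β : Type*} [AddCommMonoid β] (f : ℤ → β) (a : ℤ) (n : ℕ) :
    ∑ j ∈ range n, f (a - j) = ∑ j ∈ range n, f (a + 1 - n + j) := by
  rw [← sum_range_reflect]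
  refine sum_congr rfl fun j hj => ?_
  have := mem_range.1 hj
  congr 1
  omega

theorem laurentMon_add (a b c d : ℤ) :
    laurentMon (a + c) (b + d) = laurentMon a b * laurentMon c d := by
  simp only [laurentMon, LaurentPolynomial.T_add, map_mul]
  ring

theorem one_sub_laurentMon_one_zero_mul_sum_range_sub_left (a b : ℤ) (c : ℕ) :
    (1 - laurentMon 1 0) * ∑ i ∈ range c, laurentMon (i - a) b
      = laurentMon (-a) b - laurentMon (c - a) b := by
  induction c with
  | zero => simp
  | succ c ih =>
    rw [sum_range_succ, mul_add, ih, sub_mul, one_mul, ← laurentMon_add]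
    push_cast
    ring_nf

theorem one_sub_laurentMon_one_zero_mul_sum_range_sub_right (a b : ℤ) (c : ℕ) :
    (1 - laurentMon 1 0) * ∑ k ∈ range c, laurentMon (a - k) b
      = laurentMon (a + 1 - c) b - laurentMon (a + 1) b := by
  induction c with
  | zero => simp
  | succ c ih =>
    rw [sum_range_succ, mul_add, ih, sub_mul, one_mul, ← laurentMon_add]
    push_cast
    ring_nf

theorem laurentMon_zero_one_sub_one_mul_sum_range_sub_right (a b : ℤ) (c : ℕ) :
    (laurentMon 0 1 - 1) * ∑ l ∈ range c, laurentMon a (b - l)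
      = laurentMon a (b + 1) - laurentMon a (b + 1 - c) := by
  induction c with
  | zero => simp
  | succ c ih =>
    rw [sum_range_succ, mul_add, ih, sub_mul, one_mul, ← laurentMon_add]
    push_cast
    ring_nf

namespace YoungDiagram

variable {β : Type*} [AddCommMonoid β]

theorem sum_cells_eq_sum_range_rowLen (Y : YoungDiagram) (f : ℕ × ℕ → β) :
    ∑ c ∈ Y.cells, f c = ∑ i ∈ range (Y.colLen 0), ∑ j ∈ range (Y.rowLen i), f (i, j) := by
  rw [← sum_fiberwise_of_maps_to (g := Prod.fst) (t := range (Y.colLen 0))]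
  · refine sum_congr rfl fun i _ => ?_
    rw [← row, row_eq_prod, sum_product, sum_singleton]
  · intro c hc
    rw [mem_range, ← mem_iff_lt_colLen]
    exact Y.up_left_mem le_rfl (Nat.zero_le _) ((mem_cells c).1 hc)

theorem range_colLen_eq_filter (Y : YoungDiagram) (j : ℕ) :
    range (Y.colLen j) = (range (Y.colLen 0)).filter (j < Y.rowLen ·) := by
  ext k
  simp only [mem_range, mem_filter, ← mem_iff_lt_colLen, ← mem_iff_lt_rowLen]
  exact ⟨fun h => ⟨Y.up_left_mem le_rfl (Nat.zero_le _) h, h⟩, And.right⟩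

theorem sum_cells_sum_range_colLen (S T : YoungDiagram) (g : ℕ → ℕ → ℕ → β) :
    ∑ s ∈ S.cells, ∑ k ∈ range (T.colLen s.2), g s.1 k s.2
      = ∑ i ∈ range (S.colLen 0), ∑ k ∈ range (T.colLen 0),
          ∑ j ∈ range (min (S.rowLen i) (T.rowLen k)), g i k j := by
  rw [sum_cells_eq_sum_range_rowLen]
  refine sum_congr rfl fun i _ => ?_
  calc ∑ j ∈ range (S.rowLen i), ∑ k ∈ range (T.colLen j), g i k j
      = ∑ j ∈ range (S.rowLen i), ∑ k ∈ range (T.colLen 0),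
          if j < T.rowLen k then g i k j else 0 :=
        sum_congr rfl fun j _ => by rw [range_colLen_eq_filter, sum_filter]
    _ = _ := sum_comm
    _ = _ := sum_congr rfl fun k _ => by
        rw [← sum_filter]
        congr 1
        ext j
        simp only [mem_range, mem_filter]
        omega

end YoungDiagram

theorem laurentMon_zero_one_sub_one_mul_sum_range_sum_range (a : ℤ) (m n : ℕ) :
    (laurentMon 0 1 - 1) * ∑ j ∈ range m, ∑ l ∈ range n, laurentMon a (j - l)
      = ∑ j ∈ range (min m n), (laurentMon a (m - j) - laurentMon a (j + 1 - n)) := by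
  have hmin : range (min m n) = (range m).filter (· < n) := by
    ext; simp only [mem_range, mem_filter]; omega
  rw [mul_sum,
    sum_congr rfl fun j _ => laurentMon_zero_one_sub_one_mul_sum_range_sub_right a (j : ℕ) n,
    sum_sub_distrib, sum_range_int_succ_eq_sum_ite _ m n, ← sum_sub_distrib, hmin, sum_filter]
  refine sum_congr rfl fun j _ => ?_
  split_ifs <;> simp

theorem sum_cells_laurentMon_neg_legLength (S T : YoungDiagram) :
    ∑ s ∈ S.cells, laurentMon (-legLength T s) (armLength S s + 1)
      = (∑ s ∈ S.cells, laurentMon s.1 s.2) * laurentMon 1 1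
        + (1 - laurentMon 1 0) * ∑ i ∈ range (S.colLen 0), ∑ k ∈ range (T.colLen 0),
            ∑ j ∈ range (min (S.rowLen i) (T.rowLen k)), laurentMon (i - k) (S.rowLen i - j) := by
  have hcell : ∀ s : ℕ × ℕ, laurentMon (-legLength T s) (armLength S s + 1)
      = laurentMon (s.1 + 1) (S.rowLen s.1 - s.2)
        + (1 - laurentMon 1 0) * ∑ k ∈ range (T.colLen s.2),
            laurentMon (s.1 - k) (S.rowLen s.1 - s.2) := by
    intro s
    rw [one_sub_laurentMon_one_zero_mul_sum_range_sub_right, add_sub_cancel, legLength, armLength]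
    exact congrArg₂ laurentMon (by ring) (by ring)
  rw [sum_congr rfl fun s _ => hcell s, sum_add_distrib, ← mul_sum,
    YoungDiagram.sum_cells_sum_range_colLen S T fun i k j => laurentMon (i - k) (S.rowLen i - j)]
  congr 1
  simp only [YoungDiagram.sum_cells_eq_sum_range_rowLen, sum_mul]
  refine sum_congr rfl fun i _ => ?_
  rw [sum_range_reflect_int (laurentMon (i + 1))]
  refine sum_congr rfl fun j _ => ?_
  rw [← laurentMon_add]
  exact congrArg₂ laurentMon (by ring) (by ring)

theorem sum_cells_laurentMon_legLength_add_one (S T : YoungDiagram) :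
    ∑ t ∈ T.cells, laurentMon (legLength S t + 1) (-armLength T t)
      = ∑ t ∈ T.cells, laurentMon (-t.1) (-t.2)
        - (1 - laurentMon 1 0) * ∑ i ∈ range (S.colLen 0), ∑ k ∈ range (T.colLen 0),
            ∑ j ∈ range (min (S.rowLen i) (T.rowLen k)),
              laurentMon (i - k) (j + 1 - T.rowLen k) := by
  have hcell : ∀ t : ℕ × ℕ, laurentMon (legLength S t + 1) (-armLength T t)
      = laurentMon (-t.1) (t.2 + 1 - T.rowLen t.1)
        - (1 - laurentMon 1 0) * ∑ i ∈ range (S.colLen t.2),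
            laurentMon (i - t.1) (t.2 + 1 - T.rowLen t.1) := by
    intro t
    rw [one_sub_laurentMon_one_zero_mul_sum_range_sub_left, sub_sub_cancel, legLength, armLength]
    exact congrArg₂ laurentMon (by ring) (by ring)
  rw [sum_congr rfl fun t _ => hcell t, sum_sub_distrib, ← mul_sum,
    YoungDiagram.sum_cells_sum_range_colLen T S fun k i l =>
      laurentMon (i - k) (l + 1 - T.rowLen k),
    sum_comm]
  simp only [min_comm (T.rowLen _)]
  congr 1
  simp only [YoungDiagram.sum_cells_eq_sum_range_rowLen]
  refine sum_congr rfl fun k _ => ?_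
  have hreflect := sum_range_reflect_int (laurentMon (-k)) 0 (T.rowLen k)
  simp only [zero_sub, zero_add] at hreflect
  rw [hreflect]
  exact sum_congr rfl fun l _ => congrArg _ (by ring)

theorem laurentMon_zero_one_sub_one_mul_sum_cells_mul_sum_cells (S T : YoungDiagram) :
    (laurentMon 0 1 - 1)
        * ((∑ s ∈ S.cells, laurentMon s.1 s.2) * ∑ t ∈ T.cells, laurentMon (-t.1) (-t.2))
      = ∑ i ∈ range (S.colLen 0), ∑ k ∈ range (T.colLen 0),
          ∑ j ∈ range (min (S.rowLen i) (T.rowLen k)),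
            (laurentMon (i - k) (S.rowLen i - j) - laurentMon (i - k) (j + 1 - T.rowLen k)) := by
  rw [YoungDiagram.sum_cells_eq_sum_range_rowLen, YoungDiagram.sum_cells_eq_sum_range_rowLen,
    sum_mul_sum, mul_sum]
  refine sum_congr rfl fun i _ => ?_
  rw [mul_sum]
  refine sum_congr rfl fun k _ => ?_
  rw [← laurentMon_zero_one_sub_one_mul_sum_range_sum_range, sum_mul_sum]
  refine congrArg _ (sum_congr rfl fun j _ => sum_congr rfl fun l _ => ?_)
  rw [← laurentMon_add, ← sub_eq_add_neg, ← sub_eq_add_neg]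

/-- **Fixed-point tangent character identity** (proof of Proposition 5.1 of
Gasparim–Liu): with `Q_Y(t₁,t₂) = Σ_{(i,j)∈Y} t₁^i t₂^j`,
`Q_S·t₁t₂ + Q_T(t₁⁻¹,t₂⁻¹) − Q_S·Q_T(t₁⁻¹,t₂⁻¹)·(1−t₁)(1−t₂)
  = Σ_{s∈S} t₁^{−l_T(s)} t₂^{a_S(s)+1} + Σ_{t∈T} t₁^{l_S(t)+1} t₂^{−a_T(t)}`
in `ℤ[t₁^{±1}, t₂^{±1}]`. -/
theorem tangent_character_identity (S T : YoungDiagram) :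
    (∑ s ∈ S.cells, laurentMon (s.1 : ℤ) (s.2 : ℤ)) * laurentMon 1 1
      + (∑ t ∈ T.cells, laurentMon (-(t.1 : ℤ)) (-(t.2 : ℤ)))
      - (∑ s ∈ S.cells, laurentMon (s.1 : ℤ) (s.2 : ℤ))
          * (∑ t ∈ T.cells, laurentMon (-(t.1 : ℤ)) (-(t.2 : ℤ)))
          * (1 - laurentMon 1 0) * (1 - laurentMon 0 1)
    = (∑ s ∈ S.cells, laurentMon (-(legLength T s)) (armLength S s + 1))
      + ∑ t ∈ T.cells, laurentMon (legLength S t + 1) (-(armLength T t)) := by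
  have hpairs := laurentMon_zero_one_sub_one_mul_sum_cells_mul_sum_cells S T
  simp only [sum_sub_distrib] at hpairs
  rw [sum_cells_laurentMon_neg_legLength, sum_cells_laurentMon_legLength_add_one]
  linear_combination (1 - laurentMon 1 0) * hpairs
end

section
/- Let k be a nonzero complex number and let F : ℂ × ℂ → ℂ be analytic at (0,0). Define, for (w,u) ∈ ℂ² with w ≠ 0, u ≠ 0 and u − k·w ≠ 0, g(w,u) = −u·(u − k·w)·( F(w,u)/(w·u) + F(−w, u − k·w)/(−w·(u − k·w)) ). Then: (a) there exists H analytic at (0,0) such that g(w,u) = k·F(w,u) + u·H(w,u) for all such (w,u) in a neighborhood of (0,0); in particular (b) g(w,u) tends to k·F(0,0) as (w,u) → (0,0) within the set { (w,u) : w·u·(u−k·w) ≠ 0 }. -/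
/-!
Since `(-w, u - kw) = x + w • c` for `x = (w, u)` and `c = (-2, -k)`, the difference
`F(-w, u - kw) - F(w, u)` vanishes at `w = 0` and is `w · H(w, u)` with `H` analytic at the origin.
Substituting this, the poles along `w = 0` and `u = kw` cancel and `g = k F + u H`.

The division by `w` is done on the power series `p` of `F`: with `L x = x + ℓ x • c`, telescoping
`pₙ₊₁(Lx, …, Lx) - pₙ₊₁(x, …, x)` slot by slot writes it as `ℓ x` times a homogeneous polynomial of
degree `n` (the slot carrying `ℓ x • c` is frozen at `c`), whose norm is at most
`(n + 1) ‖pₙ₊₁‖ ‖c‖ (‖L‖ + 1)ⁿ`, so the resulting series still has positive radius.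
-/

open Filter Topology
open scoped NNReal

namespace FormalMultilinearSeries

variable {𝕜 E G : Type*} [NontriviallyNormedField 𝕜] [NormedAddCommGroup E] [NormedSpace 𝕜 E]
  [NormedAddCommGroup G] [NormedSpace 𝕜 G]

noncomputable def slopeSeries (p : FormalMultilinearSeries 𝕜 E G) (L : E →L[𝕜] E) (c : E) :
    FormalMultilinearSeries 𝕜 E G := fun n =>
  ∑ i : Fin (n + 1), ((p (n + 1)).curryMid i c).compContinuousLinearMap
    fun j => if j.castSucc < i then L else ContinuousLinearMap.id 𝕜 E

theorem slopeSeries_apply (p : FormalMultilinearSeries 𝕜 E G) (L : E →L[𝕜] E) (c : E) (n : ℕ)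
    (x : E) : slopeSeries p L c n (fun _ => x) =
      ∑ i : Fin (n + 1), p (n + 1) (i.insertNth c fun j => if j.castSucc < i then L x else x) := by
  simp only [slopeSeries, sum_apply,
    ContinuousMultilinearMap.compContinuousLinearMap_apply, ContinuousMultilinearMap.curryMid_apply]
  refine Finset.sum_congr rfl fun i _ => congrArg _ (congrArg _ (funext fun j => ?_))
  split_ifs <;> rfl

theorem smul_slopeSeries_apply (p : FormalMultilinearSeries 𝕜 E G) {L : E →L[𝕜] E} {c x : E}
    {a : 𝕜} (hL : L x = x + a • c) (n : ℕ) :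
    a • slopeSeries p L c n (fun _ => x) = p (n + 1) (fun _ => L x) - p (n + 1) (fun _ => x) := by
  have hinsert : ∀ i : Fin (n + 1), (i.insertNth (a • c) fun j => if j.castSucc < i then L x else x)
      = fun j => if j ∈ Finset.univ → j < i then L x else if i = j then L x - x else x := by
    intro i
    funext j
    rcases i.eq_self_or_eq_succAbove j with rfl | ⟨j, rfl⟩
    · simp [hL]
    · simp [Fin.succAbove_lt_iff_castSucc_lt]
  rw [slopeSeries_apply, Finset.smul_sum]
  simp_rw [← ContinuousMultilinearMap.coe_coe, ← MultilinearMap.map_insertNth_smul, hinsert]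
  rw [← (p (n + 1)).toMultilinearMap.map_sub_map_piecewise _ _ Finset.univ, Finset.piecewise_univ]

theorem norm_slopeSeries_le (p : FormalMultilinearSeries 𝕜 E G) (L : E →L[𝕜] E) (c : E) (n : ℕ) :
    ‖slopeSeries p L c n‖ ≤ (n + 1) * (‖p (n + 1)‖ * ‖c‖ * (‖L‖ + 1) ^ n) := by
  have hcurry : ∀ i, ‖(p (n + 1)).curryMid i c‖ ≤ ‖p (n + 1)‖ * ‖c‖ := fun i =>
    (ContinuousLinearMap.le_opNorm _ _).trans <| mul_le_mul_of_nonneg_right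
      (MultilinearMap.mkContinuousLinear_norm_le _ (norm_nonneg _) _) (norm_nonneg _)
  have hslot : ∀ i : Fin (n + 1), ∀ j : Fin n,
      ‖if j.castSucc < i then L else ContinuousLinearMap.id 𝕜 E‖ ≤ ‖L‖ + 1 := by
    intro i j
    split_ifs
    · linarith [norm_nonneg L]
    · linarith [ContinuousLinearMap.norm_id_le (𝕜 := 𝕜) (E := E), norm_nonneg L]
  have hterm : ∀ i : Fin (n + 1), ‖((p (n + 1)).curryMid i c).compContinuousLinearMap
      fun j => if j.castSucc < i then L else ContinuousLinearMap.id 𝕜 E‖ ≤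
        ‖p (n + 1)‖ * ‖c‖ * (‖L‖ + 1) ^ n := fun i =>
    (ContinuousMultilinearMap.norm_compContinuousLinearMap_le _ _).trans <|
      mul_le_mul (hcurry i) ((Finset.prod_le_prod (fun _ _ => norm_nonneg _)
        fun j _ => hslot i j).trans_eq (by simp)) (by positivity) (by positivity)
  calc ‖slopeSeries p L c n‖
      ≤ ∑ i : Fin (n + 1), ‖p (n + 1)‖ * ‖c‖ * (‖L‖ + 1) ^ n :=
        (norm_sum_le _ _).trans (Finset.sum_le_sum fun i _ => hterm i)
    _ = (n + 1) * (‖p (n + 1)‖ * ‖c‖ * (‖L‖ + 1) ^ n) := by simp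

theorem radius_slopeSeries_pos {p : FormalMultilinearSeries 𝕜 E G} (hp : 0 < p.radius)
    (L : E →L[𝕜] E) (c : E) : 0 < (slopeSeries p L c).radius := by
  obtain ⟨r, hr0, hrp⟩ := ENNReal.lt_iff_exists_nnreal_btwn.mp hp
  obtain ⟨C, -, hC⟩ := p.norm_mul_pow_le_of_lt_radius hrp
  have hr : (0 : ℝ) < r := by exact_mod_cast hr0
  set M := ‖L‖ + 1
  have hM : 0 < M := by positivity
  set t : ℝ := r / (2 * M)
  have ht : 0 < t := by positivity
  have htwo : ∀ n : ℕ, ((n : ℝ) + 1) / 2 ^ n ≤ 1 := fun n => by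
    rw [div_le_one (by positivity)]
    exact_mod_cast Nat.lt_two_pow_self
  have hbound : ∀ n, ‖slopeSeries p L c n‖ * t ^ n ≤ C * (‖c‖ / r) := fun n =>
    calc ‖slopeSeries p L c n‖ * t ^ n
        ≤ (n + 1) * (‖p (n + 1)‖ * ‖c‖ * M ^ n) * t ^ n := by
          gcongr
          exact norm_slopeSeries_le p L c n
      _ = (n + 1) / 2 ^ n * (‖p (n + 1)‖ * r ^ (n + 1)) * (‖c‖ / r) := by
          rw [div_pow, mul_pow]
          field_simp
          ring
      _ ≤ 1 * C * (‖c‖ / r) := by gcongr; exacts [htwo n, hC (n + 1)]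
      _ = C * (‖c‖ / r) := by rw [one_mul]
  exact (ENNReal.coe_pos.mpr (NNReal.coe_pos.mp ht : (0 : ℝ≥0) < ⟨t, ht.le⟩)).trans_le
    ((slopeSeries p L c).le_radius_of_bound (r := ⟨t, ht.le⟩) _ hbound)

end FormalMultilinearSeries

theorem AnalyticAt.exists_analyticAt_sub_eq_smul {𝕜 E G : Type*} [NontriviallyNormedField 𝕜]
    [NormedAddCommGroup E] [NormedSpace 𝕜 E] [NormedAddCommGroup G] [NormedSpace 𝕜 G]
    [CompleteSpace G] {f : E → G} (hf : AnalyticAt 𝕜 f 0) (ℓ : E →L[𝕜] 𝕜) (c : E) :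
    ∃ h : E → G, AnalyticAt 𝕜 h 0 ∧ ∀ᶠ x in 𝓝 0, f (x + ℓ x • c) - f x = ℓ x • h x := by
  obtain ⟨p, r, hp⟩ := hf
  set L : E →L[𝕜] E := ContinuousLinearMap.id 𝕜 E + ℓ.smulRight c
  have hL : ∀ x, L x = x + ℓ x • c := fun x => rfl
  set q := p.slopeSeries L c
  have hq := q.hasFPowerSeriesOnBall (p.radius_slopeSeries_pos hp.radius_pos L c)
  refine ⟨q.sum, hq.analyticAt, ?_⟩
  have hpL : ∀ᶠ x in 𝓝 (0 : E), HasSum (fun n => p n fun _ => L x) (f (L x)) := by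
    have := (L.continuous.tendsto' 0 0 (map_zero L)).eventually hp.eventually_hasSum
    simpa only [zero_add] using this
  filter_upwards [hpL, hp.eventually_hasSum, hq.eventually_hasSum] with x hLx hx hqx
  rw [zero_add] at hx hqx
  have hdiff : HasSum (fun n => p (n + 1) (fun _ => L x) - p (n + 1) fun _ => x)
      (f (L x) - f x) := by
    have hconst : (fun _ : Fin 0 => L x) = fun _ => x := Subsingleton.elim _ _
    simpa [hconst] using (hasSum_nat_add_iff' 1).mpr (hLx.sub hx)
  have hsmul := hqx.const_smul (ℓ x)
  simp only [q, p.smul_slopeSeries_apply (hL x)] at hsmul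
  exact hdiff.unique hsmul

theorem pole_part_extension_general (k : ℂ) (F : ℂ × ℂ → ℂ)
    (hF : AnalyticAt ℂ F (0, 0)) (g : ℂ × ℂ → ℂ)
    (hg : ∀ p : ℂ × ℂ, p.1 ≠ 0 → p.2 ≠ 0 → p.2 - k * p.1 ≠ 0 →
      g p = -p.2 * (p.2 - k * p.1) *
        (F p / (p.1 * p.2)
          + F (-p.1, p.2 - k * p.1) / (-(p.1 * (p.2 - k * p.1))))) :
    (∃ H : ℂ × ℂ → ℂ, AnalyticAt ℂ H (0, 0) ∧
        ∀ᶠ p : ℂ × ℂ in nhds (0, 0),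
          p.1 ≠ 0 → p.2 ≠ 0 → p.2 - k * p.1 ≠ 0 →
            g p = k * F p + p.2 * H p) ∧
      Filter.Tendsto g
        (nhdsWithin (0, 0) {p : ℂ × ℂ | p.1 * p.2 * (p.2 - k * p.1) ≠ 0})
        (nhds (k * F (0, 0))) := by
  obtain ⟨H, hH, hshift⟩ :=
    hF.exists_analyticAt_sub_eq_smul (ContinuousLinearMap.fst ℂ ℂ ℂ) (-2, -k)
  have hpole : ∀ᶠ p : ℂ × ℂ in 𝓝 (0, 0), p.1 ≠ 0 → p.2 ≠ 0 → p.2 - k * p.1 ≠ 0 →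
      g p = k * F p + p.2 * H p := by
    filter_upwards [hshift] with p hp h1 h2 h3
    have hreflect : p + p.1 • ((-2, -k) : ℂ × ℂ) = (-p.1, p.2 - k * p.1) := by
      ext <;> simp <;> ring
    rw [ContinuousLinearMap.coe_fst', hreflect, smul_eq_mul] at hp
    rw [hg p h1 h2 h3, eq_add_of_sub_eq hp]
    field_simp
    ring
  refine ⟨⟨H, hH, hpole⟩, ?_⟩
  have hcont : ContinuousAt (fun p : ℂ × ℂ => k * F p + p.2 * H p) (0, 0) :=
    (continuousAt_const.mul hF.continuousAt).add (continuousAt_snd.mul hH.continuousAt)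
  have hlim := hcont.tendsto
  rw [zero_mul, add_zero] at hlim
  refine (hlim.mono_left nhdsWithin_le_nhds).congr' ?_
  filter_upwards [nhdsWithin_le_nhds hpole, self_mem_nhdsWithin] with p hp hdom
  simp only [mul_ne_zero_iff] at hdom
  exact (hp hdom.1.1 hdom.1.2 hdom.2).symm

/-- **Analytic continuation of the pole part** (equation (gFH) in the proof of
Theorem 5.11 of Gasparim–Liu): for `k ≠ 0` and `F` analytic at `(0,0)`, the function
`g(w,u) = −u(u−kw)·(F(w,u)/(wu) + F(−w,u−kw)/(−w(u−kw)))`, defined where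
`w·u·(u−kw) ≠ 0`, satisfies `g = k·F + u·H` for some `H` analytic at `(0,0)`, and in
particular `g(w,u) → k·F(0,0)` as `(w,u) → (0,0)` within the domain. -/
theorem pole_part_extension (k : ℂ) (hk : k ≠ 0) (F : ℂ × ℂ → ℂ)
    (hF : AnalyticAt ℂ F (0, 0)) (g : ℂ × ℂ → ℂ)
    (hg : ∀ p : ℂ × ℂ, p.1 ≠ 0 → p.2 ≠ 0 → p.2 - k * p.1 ≠ 0 →
      g p = -p.2 * (p.2 - k * p.1) *
        (F p / (p.1 * p.2)
          + F (-p.1, p.2 - k * p.1) / (-(p.1 * (p.2 - k * p.1))))) :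
    (∃ H : ℂ × ℂ → ℂ, AnalyticAt ℂ H (0, 0) ∧
        ∀ᶠ p : ℂ × ℂ in nhds (0, 0),
          p.1 ≠ 0 → p.2 ≠ 0 → p.2 - k * p.1 ≠ 0 →
            g p = k * F p + p.2 * H p) ∧
      Filter.Tendsto g
        (nhdsWithin (0, 0) {p : ℂ × ℂ | p.1 * p.2 * (p.2 - k * p.1) ≠ 0})
        (nhds (k * F (0, 0))) :=
  pole_part_extension_general k F hF g hg
end

section
/- Let K be a field, let k ≥ 1 and d ≥ 1 be integers, and let t₁, t₂ ∈ K with t₁ ≠ 0, t₂ ≠ 0, t₁ ≠ 1, t₂ ≠ 1 and t₁^k · t₂ ≠ 1. Then (1 − t₂^d)/((1 − t₁^{-1})(1 − t₂^{-1})) + (1 − (t₁^k t₂)^d)/((1 − t₁)(1 − t₁^{-k} t₂^{-1})) = Σ_{j=1}^{d} Σ_{i=1}^{kj−1} t₁^i t₂^j. -/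
lemma icc_geom_sum {K : Type*} [Field K] (x : K) (hx : x ≠ 1) (m : ℕ) :
    ∑ i ∈ Finset.Icc 1 m, x ^ i = (x ^ (m + 1) - x) / (x - 1) := by
  have hx1 : x - 1 ≠ 0 := sub_ne_zero.mpr hx
  induction m with
  | zero => simp
  | succ n ih =>
      rw [Finset.sum_Icc_succ_top (by omega), ih]
      field_simp
      ring

/-- **Edge contribution on the Hirzebruch surface 𝔽_k, positive case** (Example 5.3 of
Gasparim–Liu): for `d = d_β − d_α > 0`,
`(1 − t₂^d)/((1 − t₁⁻¹)(1 − t₂⁻¹)) + (1 − (t₁^k t₂)^d)/((1 − t₁)(1 − t₁^{-k} t₂⁻¹))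
  = Σ_{j=1}^{d} Σ_{i=1}^{kj−1} t₁^i t₂^j`. -/
theorem hirzebruch_edge_positive {K : Type*} [Field K] (k d : ℕ) (hk : 1 ≤ k)
    (hd : 1 ≤ d) (t₁ t₂ : K) (h1 : t₁ ≠ 0) (h2 : t₂ ≠ 0) (h3 : t₁ ≠ 1) (h4 : t₂ ≠ 1)
    (h5 : t₁ ^ k * t₂ ≠ 1) :
    (1 - t₂ ^ d) / ((1 - t₁⁻¹) * (1 - t₂⁻¹))
      + (1 - (t₁ ^ k * t₂) ^ d) / ((1 - t₁) * (1 - (t₁ ^ k)⁻¹ * t₂⁻¹))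
    = ∑ j ∈ Finset.Icc 1 d, ∑ i ∈ Finset.Icc 1 (k * j - 1), t₁ ^ i * t₂ ^ j := by
  have ht1 : t₁ - 1 ≠ 0 := sub_ne_zero.mpr h3
  have ht2 : t₂ - 1 ≠ 0 := sub_ne_zero.mpr h4
  have ht5 : t₁ ^ k * t₂ - 1 ≠ 0 := sub_ne_zero.mpr h5
  have hp : t₁ ^ k ≠ 0 := pow_ne_zero _ h1
  have step : ∀ j ∈ Finset.Icc 1 d,
      ∑ i ∈ Finset.Icc 1 (k * j - 1), t₁ ^ i * t₂ ^ j
        = ((t₁ ^ k * t₂) ^ j - t₁ * t₂ ^ j) / (t₁ - 1) := by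
    intro j hj
    have hj1 : 1 ≤ j := (Finset.mem_Icc.mp hj).1
    have hm : k * j - 1 + 1 = k * j := by
      have : 1 ≤ k * j := Nat.one_le_iff_ne_zero.mpr (by positivity)
      omega
    rw [← Finset.sum_mul, icc_geom_sum t₁ h3, hm, pow_mul, mul_pow]
    ring
  rw [Finset.sum_congr rfl step]
  have split : ∑ j ∈ Finset.Icc 1 d, ((t₁ ^ k * t₂) ^ j - t₁ * t₂ ^ j) / (t₁ - 1)
      = ((∑ j ∈ Finset.Icc 1 d, (t₁ ^ k * t₂) ^ j)
          - t₁ * ∑ j ∈ Finset.Icc 1 d, t₂ ^ j) / (t₁ - 1) := by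
    rw [eq_div_iff ht1, Finset.sum_mul]
    simp only [div_mul_cancel₀ _ ht1]
    rw [Finset.sum_sub_distrib, Finset.mul_sum]
  rw [split, icc_geom_sum _ h5, icc_geom_sum _ h4]
  have hX : (t₁ ^ k * t₂) ^ (d + 1) = (t₁ ^ k * t₂) ^ d * (t₁ ^ k * t₂) := pow_succ _ _
  have hY : t₂ ^ (d + 1) = t₂ ^ d * t₂ := pow_succ _ _
  rw [hX, hY, mul_pow]
  generalize (t₁ ^ k : K) = a at hp ht5 ⊢
  generalize (t₂ ^ d : K) = X
  generalize (a ^ d : K) = Z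
  have e1 : (1 - t₁⁻¹) * (1 - t₂⁻¹) = (t₁ - 1) * (t₂ - 1) / (t₁ * t₂) := by
    field_simp
  have e2 : (1 - t₁) * (1 - a⁻¹ * t₂⁻¹) = (1 - t₁) * (a * t₂ - 1) / (a * t₂) := by
    field_simp
  rw [e1, e2]
  have h1t : (1 : K) - t₁ ≠ 0 := fun h => ht1 (by linear_combination -h)
  field_simp
  ring
end
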